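/- (Average-degree bound.) Let G be a simple graph with v vertices and e edges, and let n < v. If C₁, …, C_k are mutually orthogonal n-colorings of G, then k·v·(v−n) ≤ n·(v·(v−1) − 2e). (Equivalently, with average degree D = 2e/v, k ≤ ⌊(v−D−1)·n/(v−n)⌋.) -/

import Mathlib

/-- A proper `n`-coloring of a simple graph `G`. -/
def IsProperColoring {V : Type*} (G : SimpleGraph V) (n : ℕ) (C : V → Fin n) : Prop :=
  ∀ u v, G.Adj u v → C u ≠ C v

/-- Two `n`-colorings are orthogonal if whenever two distinct vertices share a color
in the first, they have distinct colors in the second. -/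
def OrthogonalColorings {V : Type*} {n : ℕ} (C₁ C₂ : V → Fin n) : Prop :=
  ∀ u v, u ≠ v → C₁ u = C₁ v → C₂ u ≠ C₂ v

/-!
Count ordered pairs of distinct vertices of the same colour. For an `n`-coloring with colour
classes of sizes `f c`, there are `∑ f c ^ 2 - v ≥ v ^ 2 / n - v` of them (Cauchy–Schwarz).
A proper coloring only pairs non-adjacent vertices, of which there are `v (v - 1) - 2e`, and
orthogonality says that no pair is monochromatic in two of the colorings. Summing over the
`k` colorings gives `k (v ^ 2 / n - v) ≤ v (v - 1) - 2e`.
-/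

open Finset

namespace SimpleGraph

variable {V : Type*} [Fintype V] (G : SimpleGraph V) [Fintype G.edgeSet] [DecidableRel G.Adj]

theorem card_filter_adj_eq_two_mul_card_edgeFinset :
    #(univ.filter fun p : V × V => G.Adj p.1 p.2) = 2 * #G.edgeFinset := by
  let darts : G.Dart ≃ {p : V × V // G.Adj p.1 p.2} :=
    { toFun d := ⟨d.toProd, d.adj⟩
      invFun p := ⟨p.1, p.2⟩
      left_inv _ := rfl
      right_inv _ := rfl }
  rw [← Fintype.card_subtype, ← Fintype.card_congr darts]
  convert G.dart_card_eq_twice_card_edges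

theorem card_offDiag_filter_not_adj :
    #((univ : Finset V).offDiag.filter fun p => ¬G.Adj p.1 p.2) + 2 * #G.edgeFinset =
      Fintype.card V * Fintype.card V - Fintype.card V := by
  have hadj : (univ : Finset V).offDiag.filter (fun p => G.Adj p.1 p.2) =
      univ.filter fun p : V × V => G.Adj p.1 p.2 := by
    ext p
    simpa using fun h : G.Adj p.1 p.2 => h.ne
  rw [← card_filter_adj_eq_two_mul_card_edgeFinset, ← hadj, add_comm,
    card_filter_add_card_filter_not, offDiag_card, card_univ]

end SimpleGraph

section SameColorPairs

variable {V α : Type*} [Fintype V] [Fintype α] [DecidableEq α]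

def sameColorPairs (C : V → α) : Finset (V × V) :=
  (univ : Finset V).offDiag.filter fun p => C p.1 = C p.2

theorem sum_sq_card_colorClass (C : V → α) :
    ∑ c, #(univ.filter fun u => C u = c) ^ 2 = #(sameColorPairs C) + Fintype.card V := by
  classical
  have hfiber (c : α) : (univ.filter fun p : V × V => C p.1 = C p.2).filter
      (fun p => C p.1 = c) =
      (univ.filter fun u => C u = c) ×ˢ (univ.filter fun u => C u = c) := by
    ext ⟨u, w⟩
    simp only [mem_filter, mem_univ, true_and, mem_product]
    constructor
    · rintro ⟨huw, rfl⟩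
      exact ⟨rfl, huw.symm⟩
    · rintro ⟨rfl, hw⟩
      exact ⟨hw.symm, rfl⟩
  have hdiag : (univ : Finset V).diag.filter (fun p => C p.1 = C p.2) = univ.diag :=
    filter_true_of_mem fun p hp => by rw [(mem_diag.1 hp).2]
  calc ∑ c, #(univ.filter fun u => C u = c) ^ 2
      = #(univ.filter fun p : V × V => C p.1 = C p.2) := by
        rw [card_eq_sum_card_fiberwise (f := fun p => C p.1) fun _ _ => mem_univ _]
        simp only [hfiber, card_product, sq]
    _ = #(sameColorPairs C) + Fintype.card V := by
        rw [← univ_product_univ, ← diag_union_offDiag, filter_union,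
          card_union_of_disjoint (disjoint_filter_filter (disjoint_diag_offDiag _)), hdiag,
          diag_card, card_univ, add_comm, sameColorPairs]

theorem card_sq_le_card_mul_card_sameColorPairs (C : V → α) :
    Fintype.card V ^ 2 ≤ Fintype.card α * (#(sameColorPairs C) + Fintype.card V) := by
  have hclasses : ∑ c, #(univ.filter fun u => C u = c) = Fintype.card V := by
    rw [← card_univ, card_eq_sum_card_fiberwise (f := C) fun _ _ => mem_univ _]
  rw [← sum_sq_card_colorClass, ← hclasses, ← card_univ]
  exact sq_sum_le_card_mul_sum_sq

end SameColorPairs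

section Colorings

variable {V : Type*} [Fintype V] {n : ℕ}

theorem IsProperColoring.sameColorPairs_subset {G : SimpleGraph V} [DecidableRel G.Adj]
    {C : V → Fin n} (hC : IsProperColoring G n C) :
    sameColorPairs C ⊆ (univ : Finset V).offDiag.filter fun p => ¬G.Adj p.1 p.2 := by
  intro p hp
  rw [sameColorPairs, mem_filter] at hp
  exact mem_filter.2 ⟨hp.1, fun hadj => hC _ _ hadj hp.2⟩

theorem OrthogonalColorings.disjoint_sameColorPairs {C₁ C₂ : V → Fin n}
    (h : OrthogonalColorings C₁ C₂) : Disjoint (sameColorPairs C₁) (sameColorPairs C₂) := by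
  refine disjoint_left.2 fun p hp₁ hp₂ => ?_
  simp only [sameColorPairs, mem_filter, mem_offDiag] at hp₁ hp₂
  exact h _ _ hp₁.1.2.2 hp₁.2 hp₂.2

end Colorings

theorem stmt_3_general {V : Type*} [Fintype V] (G : SimpleGraph V) [Fintype G.edgeSet]
    (v e n k : ℕ) (hv : v = Fintype.card V) (he : e = G.edgeFinset.card)
    (C : Fin k → V → Fin n)
    (hproper : ∀ i, IsProperColoring G n (C i))
    (horth : ∀ i j, i ≠ j → OrthogonalColorings (C i) (C j)) :
    (k : ℤ) * v * ((v : ℤ) - n) ≤ (n : ℤ) * ((v : ℤ) * ((v : ℤ) - 1) - 2 * e) := by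
  classical
  subst he
  have hsum : ∑ i, #(sameColorPairs (C i)) ≤
      #((univ : Finset V).offDiag.filter fun p => ¬G.Adj p.1 p.2) := by
    rw [← card_biUnion fun i _ j _ hij => (horth i j hij).disjoint_sameColorPairs]
    exact card_le_card (biUnion_subset.2 fun i _ => (hproper i).sameColorPairs_subset)
  have hnonadj := G.card_offDiag_filter_not_adj
  rw [← hv] at hnonadj
  zify [Nat.le_mul_self v] at hsum hnonadj
  have hlow (i : Fin k) : (v : ℤ) ^ 2 ≤ n * (#(sameColorPairs (C i)) + v) := by
    have := card_sq_le_card_mul_card_sameColorPairs (C i)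
    rw [Fintype.card_fin, ← hv] at this
    exact_mod_cast this
  calc (k : ℤ) * v * (v - n) = ∑ i : Fin k, ((v : ℤ) ^ 2 - n * v) := by
        rw [sum_const, card_univ, Fintype.card_fin, nsmul_eq_mul]; ring
    _ ≤ ∑ i, (n : ℤ) * #(sameColorPairs (C i)) :=
        sum_le_sum fun i _ => by linarith [hlow i]
    _ ≤ n * ((v : ℤ) * (v - 1) - 2 * #G.edgeFinset) := by
        rw [← mul_sum]
        exact mul_le_mul_of_nonneg_left (by linarith) (by positivity)

/-- Average-degree bound: if `G` has `v` vertices and `e` edges and `n < v`, then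
`k` mutually orthogonal `n`-colorings satisfy `k·v·(v − n) ≤ n·(v·(v − 1) − 2e)`. -/
theorem stmt_3 {V : Type*} [Fintype V] (G : SimpleGraph V) [Fintype G.edgeSet]
    (v e n k : ℕ) (hv : v = Fintype.card V) (he : e = G.edgeFinset.card)
    (hn : n < v)
    (C : Fin k → V → Fin n)
    (hproper : ∀ i, IsProperColoring G n (C i))
    (horth : ∀ i j, i ≠ j → OrthogonalColorings (C i) (C j)) :
    (k : ℤ) * v * ((v : ℤ) - n) ≤ (n : ℤ) * ((v : ℤ) * ((v : ℤ) - 1) - 2 * e) :=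
  stmt_3_general G v e n k hv he C hproper horth
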